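/- The number W(n, δ) of words X of length n over the 2k-letter alphabet with ℓ(X) < nδ satisfies W(n,δ) ≤ C(n, r) · (2k)^r · |T_{2m}|, where r = n - 2m, m = ⌈(n - nδ)/2⌉, and T_{2m} is the set of words of length 2m representing the identity in F_k. -/

import Mathlib

/-!
A non-crossing matching of `X` attaining `ℓ(X) < nδ` has at least `m = ⌈(n - nδ)/2⌉`
pairs; keep exactly `m` of them. Cancelling innermost pairs one at a
time shows that the `2m` matched letters, read in order, spell the identity of `F_k`. Hence `X`
is determined by its `r = n - 2m` unmatched positions, the letters there, and a word of length
`2m` representing `1`.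
-/

open scoped BigOperators

abbrev Letter (k : ℕ) := Fin k × Bool

def Letter.bar {k : ℕ} (x : Letter k) : Letter k := (x.1, !x.2)

/-- `M` is an (incomplete) non-crossing matching of the word `X`,
pairing letters with their inverse letters. -/
def IsNCMatching {k : ℕ} (X : List (Letter k)) (M : Finset (ℕ × ℕ)) : Prop :=
  (∀ p ∈ M, p.1 < p.2 ∧ p.2 < X.length ∧ X[p.1]? = (X[p.2]?).map Letter.bar) ∧
  (∀ p ∈ M, ∀ q ∈ M, p ≠ q → p.1 ≠ q.1 ∧ p.1 ≠ q.2 ∧ p.2 ≠ q.1 ∧ p.2 ≠ q.2) ∧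
  (∀ p ∈ M, ∀ q ∈ M, ¬ (p.1 < q.1 ∧ q.1 < p.2 ∧ p.2 < q.2))

/-- minimal number of unmatched letters over all non-crossing matchings of `X`. -/
noncomputable def ell {k : ℕ} (X : List (Letter k)) : ℕ :=
  sInf {m | ∃ M : Finset (ℕ × ℕ), IsNCMatching X M ∧ m = X.length - 2 * M.card}

/-- `L_k(n)`: the expected value of `ell` over uniformly random words of length `n`. -/
noncomputable def Lk (k n : ℕ) : ℝ :=
  (∑ w : Fin n → Letter k, (ell (List.ofFn w) : ℝ)) / (2 * k) ^ n

noncomputable def lambda (k : ℕ) : ℝ := ⨅ n : ℕ+, Lk k n / n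

theorem test : True := trivial

theorem List.exists_eq_append_cons_cons_of_pairwise_lt {α : Type*} [LinearOrder α] {l : List α}
    (hl : l.Pairwise (· < ·)) {i j : α} (hi : i ∈ l) (hj : j ∈ l) (hij : i < j)
    (hgap : ∀ t ∈ l, ¬(i < t ∧ t < j)) : ∃ P Q, l = P ++ i :: j :: Q := by
  obtain ⟨P, R, rfl⟩ := List.append_of_mem hi
  rw [List.pairwise_append, List.pairwise_cons] at hl
  have hjR : j ∈ R := by
    rcases List.mem_append.1 hj with hjP | hjR
    · exact absurd (hl.2.2 j hjP i List.mem_cons_self) (lt_asymm hij)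
    · exact (List.mem_cons.1 hjR).resolve_left hij.ne'
  obtain _ | ⟨b, Q⟩ := R
  · simp at hjR
  obtain rfl | hjQ := List.mem_cons.1 hjR
  · exact ⟨P, Q, rfl⟩
  · have hib : i < b := hl.2.1.1 b List.mem_cons_self
    have hbj : b < j := (List.pairwise_cons.1 hl.2.1.2).1 j hjQ
    exact absurd ⟨hib, hbj⟩ (hgap b (by simp))

theorem List.mem_append_iff_of_pairwise_lt {α : Type*} [LinearOrder α] {P Q : List α} {i j : α}
    (hl : (P ++ i :: j :: Q).Pairwise (· < ·)) {t : α} :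
    t ∈ P ++ Q ↔ t ∈ P ++ i :: j :: Q ∧ t ≠ i ∧ t ≠ j := by
  simp only [List.pairwise_append, List.pairwise_cons, List.mem_append, List.mem_cons] at hl ⊢
  constructor
  · rintro (htP | htQ)
    · exact ⟨Or.inl htP, (hl.2.2 t htP i (by simp)).ne, (hl.2.2 t htP j (by simp)).ne⟩
    · exact ⟨Or.inr (Or.inr (Or.inr htQ)), (hl.2.1.1 t (by simp [htQ])).ne',
        (hl.2.1.2.1 t htQ).ne'⟩
  · rintro ⟨ht | ht | ht | ht, hti, htj⟩ <;> first | contradiction | simp [ht]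

theorem FreeGroup.mk_append_cons_cons_cancel {α : Type*} (L₁ L₂ : List (α × Bool)) (x : α)
    (b : Bool) :
    FreeGroup.mk (L₁ ++ (x, !b) :: (x, b) :: L₂) = FreeGroup.mk (L₁ ++ L₂) :=
  Quot.sound FreeGroup.Red.Step.not_rev

def matchedIndices (M : Finset (ℕ × ℕ)) : Finset ℕ :=
  M.image Prod.fst ∪ M.image Prod.snd

theorem mem_matchedIndices {M : Finset (ℕ × ℕ)} {t : ℕ} :
    t ∈ matchedIndices M ↔ ∃ p ∈ M, t = p.1 ∨ t = p.2 := by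
  simp only [matchedIndices, Finset.mem_union, Finset.mem_image]
  constructor
  · rintro (⟨p, hp, rfl⟩ | ⟨p, hp, rfl⟩) <;> exact ⟨p, hp, by simp⟩
  · rintro ⟨p, hp, rfl | rfl⟩
    exacts [Or.inl ⟨p, hp, rfl⟩, Or.inr ⟨p, hp, rfl⟩]

namespace IsNCMatching

variable {k : ℕ} {X : List (Letter k)} {M : Finset (ℕ × ℕ)}

theorem mono {M' : Finset (ℕ × ℕ)} (hM : IsNCMatching X M) (h : M' ⊆ M) :
    IsNCMatching X M' :=
  ⟨fun p hp => hM.1 p (h hp), fun p hp q hq => hM.2.1 p (h hp) q (h hq),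
    fun p hp q hq => hM.2.2 p (h hp) q (h hq)⟩

theorem empty (X : List (Letter k)) : IsNCMatching X ∅ := by
  refine ⟨?_, ?_, ?_⟩ <;> simp

theorem lt_length_of_mem_matchedIndices (hM : IsNCMatching X M) {t : ℕ}
    (ht : t ∈ matchedIndices M) : t < X.length := by
  obtain ⟨p, hp, rfl | rfl⟩ := mem_matchedIndices.1 ht <;> have := hM.1 p hp <;> omega

theorem card_matchedIndices (hM : IsNCMatching X M) : (matchedIndices M).card = 2 * M.card := by
  rw [matchedIndices, Finset.card_union_of_disjoint, Finset.card_image_of_injOn,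
    Finset.card_image_of_injOn, two_mul]
  · exact fun p hp q hq h => by_contra fun hpq => (hM.2.1 p hp q hq hpq).2.2.2 h
  · exact fun p hp q hq h => by_contra fun hpq => (hM.2.1 p hp q hq hpq).1 h
  · simp only [Finset.disjoint_left, Finset.mem_image, not_exists, not_and]
    rintro _ ⟨p, hp, rfl⟩ q hq hqp
    obtain rfl | hpq := eq_or_ne p q
    · exact (hM.1 p hp).1.ne' hqp
    · exact (hM.2.1 p hp q hq hpq).2.1 hqp.symm

theorem mem_matchedIndices_erase (hM : IsNCMatching X M) {p : ℕ × ℕ} (hp : p ∈ M) {t : ℕ} :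
    t ∈ matchedIndices (M.erase p) ↔ t ∈ matchedIndices M ∧ t ≠ p.1 ∧ t ≠ p.2 := by
  simp only [mem_matchedIndices, Finset.mem_erase]
  constructor
  · rintro ⟨q, ⟨hqp, hq⟩, ht⟩
    have := hM.2.1 q hq p hp hqp
    refine ⟨⟨q, hq, ht⟩, ?_, ?_⟩ <;> rcases ht with rfl | rfl <;> tauto
  · rintro ⟨⟨q, hq, ht⟩, ht1, ht2⟩
    refine ⟨q, ⟨?_, hq⟩, ht⟩
    rintro rfl
    rcases ht with rfl | rfl <;> contradiction

theorem not_mem_Ioo_of_forall_le (hM : IsNCMatching X M) {p : ℕ × ℕ} (hp : p ∈ M)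
    (hmin : ∀ q ∈ M, p.2 - p.1 ≤ q.2 - q.1) {t : ℕ} (ht : t ∈ matchedIndices M) :
    ¬(p.1 < t ∧ t < p.2) := by
  obtain ⟨q, hq, htq⟩ := mem_matchedIndices.1 ht
  rintro ⟨h1, h2⟩
  obtain rfl | hpq := eq_or_ne p q
  · rcases htq with rfl | rfl <;> omega
  have hd := hM.2.1 p hp q hq hpq
  have hq12 := (hM.1 q hq).1
  have hcross := hM.2.2 p hp q hq
  have hcross' := hM.2.2 q hq p hp
  have hspan := hmin q hq
  rcases htq with rfl | rfl <;> omega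

theorem mk_filterMap_eq_one (hM : IsNCMatching X M) {l : List ℕ} (hl : l.Pairwise (· < ·))
    (hlM : ∀ t, t ∈ l ↔ t ∈ matchedIndices M) :
    FreeGroup.mk (l.filterMap (X[·]?)) = 1 := by
  induction M using Finset.strongInduction generalizing l with
  | H M ih =>
  obtain rfl | hne := M.eq_empty_or_nonempty
  · obtain rfl : l = [] := List.eq_nil_iff_forall_not_mem.2 fun t ht => by
      simpa [matchedIndices] using (hlM t).1 ht
    rfl
  obtain ⟨p, hp, hmin⟩ := M.exists_min_image (fun q => q.2 - q.1) hne
  obtain ⟨hp12, hp2, hXp⟩ := hM.1 p hp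
  have hp1l : p.1 ∈ l := (hlM _).2 (mem_matchedIndices.2 ⟨p, hp, Or.inl rfl⟩)
  have hp2l : p.2 ∈ l := (hlM _).2 (mem_matchedIndices.2 ⟨p, hp, Or.inr rfl⟩)
  -- `p` has minimal span, so no matched index lies strictly inside it: its two letters are
  -- adjacent in `l` and cancel, leaving the word of the smaller matching `M.erase p`.
  obtain ⟨P, Q, rfl⟩ := List.exists_eq_append_cons_cons_of_pairwise_lt hl hp1l hp2l hp12
    fun t ht => hM.not_mem_Ioo_of_forall_le hp hmin ((hlM t).1 ht)
  have hPQ : FreeGroup.mk ((P ++ Q).filterMap (X[·]?)) = 1 :=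
    ih _ (M.erase_ssubset hp) (hM.mono (M.erase_subset p)) (hl.sublist (by simp)) fun t => by
      rw [hM.mem_matchedIndices_erase hp, ← hlM, List.mem_append_iff_of_pairwise_lt hl]
  obtain ⟨y, hy⟩ : ∃ y, X[p.2]? = some y := ⟨X[p.2], List.getElem?_eq_getElem hp2⟩
  have hx : X[p.1]? = some (y.1, !y.2) := by rw [hXp, hy]; rfl
  rw [← hPQ, List.filterMap_append, List.filterMap_append]
  simpa [hx, hy] using FreeGroup.mk_append_cons_cons_cancel _ _ y.1 y.2

end IsNCMatching

theorem IsNCMatching.exists_mk_subword_eq_one {k n : ℕ} {w : Fin n → Letter k}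
    {M : Finset (ℕ × ℕ)} (hM : IsNCMatching (List.ofFn w) M) :
    ∃ I : Finset (Fin n), ∃ hI : I.card = 2 * M.card,
      FreeGroup.mk (List.ofFn fun a => w (I.orderEmbOfFin hI a)) = 1 := by
  have hlt : ∀ t ∈ matchedIndices M, t < n := fun t ht => by
    simpa using hM.lt_length_of_mem_matchedIndices ht
  set I := (matchedIndices M).attachFin hlt
  have hI : I.card = 2 * M.card := by rw [Finset.card_attachFin, hM.card_matchedIndices]
  refine ⟨I, hI, ?_⟩
  have hsorted : ((List.ofFn (I.orderEmbOfFin hI)).map Fin.val).Pairwise (· < ·) :=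
    List.pairwise_map.2 (List.pairwise_ofFn.2 fun _ _ hab => (I.orderEmbOfFin hI).strictMono hab)
  have hmem (t : ℕ) :
      t ∈ (List.ofFn (I.orderEmbOfFin hI)).map Fin.val ↔ t ∈ matchedIndices M := by
    simp only [List.mem_map, List.mem_ofFn, ← Set.mem_range, Finset.range_orderEmbOfFin,
      Finset.mem_coe, I, Finset.mem_attachFin]
    exact ⟨fun ⟨a, ha, hat⟩ => hat ▸ ha, fun ht => ⟨⟨t, hlt t ht⟩, ht, rfl⟩⟩
  simpa [List.filterMap_map, Function.comp_def, List.getElem?_ofFn, List.map_ofFn] using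
    hM.mk_filterMap_eq_one hsorted hmem

theorem Finset.eqOn_of_forall_orderEmbOfFin {α β : Type*} [LinearOrder α] {s : Finset α}
    {k : ℕ} (h : s.card = k) {f g : α → β}
    (hfg : ∀ a, f (s.orderEmbOfFin h a) = g (s.orderEmbOfFin h a)) : Set.EqOn f g s := by
  intro x hx
  obtain ⟨a, rfl⟩ : x ∈ Set.range (s.orderEmbOfFin h) := by
    rwa [Finset.range_orderEmbOfFin]
  exact hfg a

section Subwords

variable {α : Type*} [Fintype α] {n s : ℕ}

/-- A word is determined by its subword on `I` and its subword on `Iᶜ`. -/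
theorem card_subword_le (Q : (Fin s → α) → Prop) (I : Finset (Fin n)) (hI : I.card = s) :
    Nat.card {w : Fin n → α // Q fun a => w (I.orderEmbOfFin hI a)} ≤
      Fintype.card α ^ (n - s) * Nat.card {z // Q z} := by
  have hc : Iᶜ.card = n - s := by rw [Finset.card_compl, Fintype.card_fin, hI]
  let F (w : {w : Fin n → α // Q fun a => w (I.orderEmbOfFin hI a)}) :
      (Fin (n - s) → α) × {z // Q z} :=
    (fun a => w.1 (Iᶜ.orderEmbOfFin hc a), ⟨fun a => w.1 (I.orderEmbOfFin hI a), w.2⟩)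
  have hF : F.Injective := by
    rintro ⟨w, hw⟩ ⟨w', hw'⟩ h
    simp only [F, Prod.mk.injEq, Subtype.mk.injEq] at h
    refine Subtype.ext (funext fun i => ?_)
    by_cases hi : i ∈ I
    · exact Finset.eqOn_of_forall_orderEmbOfFin hI (congrFun h.2) hi
    · exact Finset.eqOn_of_forall_orderEmbOfFin hc (congrFun h.1) (Finset.mem_compl.2 hi)
  calc _ ≤ Nat.card ((Fin (n - s) → α) × {z // Q z}) := Nat.card_le_card_of_injective F hF
    _ = _ := by simp [Nat.card_prod]

theorem card_le_of_forall_exists_subword (P : (Fin n → α) → Prop) (Q : (Fin s → α) → Prop)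
    (h : ∀ w, P w →
      ∃ I : Finset (Fin n), ∃ hI : I.card = s, Q fun a => w (I.orderEmbOfFin hI a)) :
    Nat.card {w // P w} ≤ n.choose s * Fintype.card α ^ (n - s) * Nat.card {z // Q z} := by
  classical
  choose I hI hQ using h
  let F (w : {w // P w}) : Σ J : {J : Finset (Fin n) // J.card = s},
      {w : Fin n → α // Q fun a => w (J.1.orderEmbOfFin J.2 a)} :=
    ⟨⟨I w.1 w.2, hI w.1 w.2⟩, ⟨w.1, hQ w.1 w.2⟩⟩
  have hF : F.Injective := fun w w' h => Subtype.ext (congrArg (fun x => x.2.1) h)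
  calc Nat.card {w // P w} ≤ Nat.card (Σ J : {J : Finset (Fin n) // J.card = s},
        {w : Fin n → α // Q fun a => w (J.1.orderEmbOfFin J.2 a)}) :=
        Nat.card_le_card_of_injective F hF
    _ = ∑ J : {J : Finset (Fin n) // J.card = s},
        Nat.card {w : Fin n → α // Q fun a => w (J.1.orderEmbOfFin J.2 a)} := Nat.card_sigma
    _ ≤ ∑ _J : {J : Finset (Fin n) // J.card = s},
        Fintype.card α ^ (n - s) * Nat.card {z // Q z} :=
        Finset.sum_le_sum fun J _ => card_subword_le Q J.1 J.2
    _ = _ := by simp [Fintype.card_finset_len, mul_assoc]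

end Subwords

theorem exists_isNCMatching_ell_eq {k : ℕ} (X : List (Letter k)) :
    ∃ M, IsNCMatching X M ∧ ell X = X.length - 2 * M.card :=
  Nat.sInf_mem (s := {m | ∃ M, IsNCMatching X M ∧ m = X.length - 2 * M.card})
    ⟨X.length, ∅, IsNCMatching.empty X, by simp⟩

theorem Nat.ceil_half_sub_le_of_cast_sub_lt {N c : ℕ} {x : ℝ}
    (h : ((N - 2 * c : ℕ) : ℝ) < x) :
    ⌈((N : ℝ) - x) / 2⌉₊ ≤ c := by
  have : N ≤ N - 2 * c + 2 * c := by omega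
  have : (N : ℝ) ≤ ((N - 2 * c : ℕ) : ℝ) + 2 * c := by exact_mod_cast this
  exact Nat.ceil_le.2 (by linarith)

theorem Nat.choose_le_choose_sub_self (n k : ℕ) : n.choose k ≤ n.choose (n - k) := by
  rcases le_or_gt k n with hk | hk
  · rw [Nat.choose_symm hk]
  · simp [Nat.choose_eq_zero_of_lt hk]

theorem count_small_ell_le_general (k n : ℕ) (δ : ℝ) :
    Nat.card {w : Fin n → Letter k // (ell (List.ofFn w) : ℝ) < n * δ} ≤
      Nat.choose n (n - 2 * ⌈((n : ℝ) - n * δ) / 2⌉₊) *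
        (2 * k) ^ (n - 2 * ⌈((n : ℝ) - n * δ) / 2⌉₊) *
        Nat.card {z : Fin (2 * ⌈((n : ℝ) - n * δ) / 2⌉₊) → Letter k //
          FreeGroup.mk (List.ofFn z) = 1} := by
  obtain ⟨m, hm⟩ : ∃ m, ⌈((n : ℝ) - n * δ) / 2⌉₊ = m := ⟨_, rfl⟩
  rw [hm]
  have hsub : ∀ w : Fin n → Letter k, (ell (List.ofFn w) : ℝ) < n * δ →
      ∃ I : Finset (Fin n), ∃ hI : I.card = 2 * m,
        FreeGroup.mk (List.ofFn fun a => w (I.orderEmbOfFin hI a)) = 1 := by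
    intro w hw
    obtain ⟨M, hM, hell⟩ := exists_isNCMatching_ell_eq (List.ofFn w)
    rw [hell, List.length_ofFn] at hw
    obtain ⟨M', hM'M, rfl⟩ :=
      Finset.exists_subset_card_eq (hm ▸ Nat.ceil_half_sub_le_of_cast_sub_lt hw)
    exact (hM.mono hM'M).exists_mk_subword_eq_one
  have hcard : Fintype.card (Letter k) = 2 * k := by simp [mul_comm]
  calc _ ≤ n.choose (2 * m) * Fintype.card (Letter k) ^ (n - 2 * m) * _ :=
        card_le_of_forall_exists_subword _ _ hsub
    _ ≤ _ := by rw [hcard]; gcongr; exact Nat.choose_le_choose_sub_self n _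

/-- `W(n,δ) ≤ C(n,r)·(2k)^r·|T_{2m}|` where `m = ⌈(n - nδ)/2⌉` and `r = n - 2m`:
a word with fewer than `nδ` unmatched letters is determined by the subword of
unmatched letters, the (trivial) subword of matched letters, and the unmatched positions. -/
theorem count_small_ell_le (k n : ℕ) (hk : 2 ≤ k) (δ : ℝ) (h0 : 0 < δ) (h1 : δ < 1) :
    Nat.card {w : Fin n → Letter k // (ell (List.ofFn w) : ℝ) < n * δ} ≤
      Nat.choose n (n - 2 * ⌈((n : ℝ) - n * δ) / 2⌉₊) *
        (2 * k) ^ (n - 2 * ⌈((n : ℝ) - n * δ) / 2⌉₊) *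
        Nat.card {z : Fin (2 * ⌈((n : ℝ) - n * δ) / 2⌉₊) → Letter k //
          FreeGroup.mk (List.ofFn z) = 1} :=
  count_small_ell_le_general k n δ
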